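/- Let (X_{i,n})_{1≤i≤n} be a triangular array of independent random vectors with values in ℝ^d which belongs to the class C̄(d,b) for some b>0 and satisfies sup_{n≥1} ρ₁(n) < ∞. Then for all 0 < r < R, limsup_{n→∞} sup_{r ≤ ‖u‖₂ ≤ R} (1/n) ∑_{i=1}^n |φ_{X_{i,n}}(u)| < 1. -/

import Mathlib

open MeasureTheory ProbabilityTheory Filter RealInnerProductSpace

variable {Ω : Type*} [MeasureSpace Ω]

/-- The characteristic function of a random vector `X : Ω → ℝ^d`. -/
noncomputable def charFnRV {d : ℕ} (X : Ω → EuclideanSpace ℝ (Fin d))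
    (t : EuclideanSpace ℝ (Fin d)) : ℂ :=
  ∫ ω, Complex.exp ((⟪t, X ω⟫ : ℝ) * Complex.I) ∂ℙ

/-- The mean weak Cramer condition (class `C̄(d,b)`) for a triangular array
`(X_{i,n})_{0 ≤ i < n}`. -/
def meanWeakCramer {d : ℕ} (X : ℕ → ℕ → Ω → EuclideanSpace ℝ (Fin d)) (b : ℝ) : Prop :=
  ∃ C > (0 : ℝ), ∃ R > (0 : ℝ), ∀ t : EuclideanSpace ℝ (Fin d), R < ‖t‖ →
    ∀ᶠ n : ℕ in atTop,
      (1 / (n : ℝ)) * ∑ i ∈ Finset.range n, ‖charFnRV (X i n) t‖ ≤ 1 - C / ‖t‖ ^ b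

/-- The average `ℓ`-th moment `ρ_ℓ(n)` of a triangular array. -/
noncomputable def rho {d : ℕ} (X : ℕ → ℕ → Ω → EuclideanSpace ℝ (Fin d)) (ℓ : ℝ) (n : ℕ) : ℝ :=
  (1 / (n : ℝ)) * ∑ i ∈ Finset.range n, ∫ ω, ‖X i n ω‖ ^ ℓ ∂ℙ

/-!
Choose `k ∈ ℕ` with `k r` beyond the Cramér radius. The averages `(1/n) ∑ |φ_{X_{i,n}}|` are
Lipschitz with constant `ρ₁(n)`, bounded in `n`, so the pointwise Cramér bound upgrades, by
compactness, to a bound `1 - δ` holding eventually and uniformly on the annulus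
`k r ≤ ‖t‖ ≤ k R`. To come back from `k u` to `u`, apply `1 - cos (k x) ≤ k² (1 - cos x)` to the
symmetrised law `μ ∗ μ(-·)`, whose characteristic function is `|φ_μ|²`: this gives
`1 - |φ(k u)|² ≤ k² (1 - |φ(u)|²)`, and averaging with Cauchy–Schwarz bounds the average at `u`
by `√(1 - δ / k²) < 1`.
-/

lemma IsCompact.eventually_forall_le_of_lipschitz {ι E : Type*} [PseudoMetricSpace E]
    {l : Filter ι} {S : Set E} (hS : IsCompact S) {f : ι → E → ℝ} {L c ε : ℝ} (hε : 0 < ε)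
    (hlip : ∀ᶠ i in l, ∀ s t, f i t ≤ f i s + L * dist t s)
    (hpt : ∀ t ∈ S, ∀ᶠ i in l, f i t ≤ c) :
    ∀ᶠ i in l, ∀ t ∈ S, f i t ≤ c + ε := by
  obtain ⟨T, hTS, hTfin, hcover⟩ :=
    finite_cover_balls_of_compact hS (div_pos hε (by positivity : 0 < |L| + 1))
  filter_upwards [hlip, (eventually_all_finite hTfin).2 fun s hs => hpt s (hTS hs)]
    with i hlip_i hT t ht
  obtain ⟨s, hs, hts⟩ := Set.mem_iUnion₂.1 (hcover ht)
  have hclose : L * dist t s ≤ ε :=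
    calc L * dist t s ≤ |L| * dist t s := by gcongr; exact le_abs_self L
      _ ≤ (|L| + 1) * (ε / (|L| + 1)) :=
        mul_le_mul (by linarith) (Metric.mem_ball.1 hts).le dist_nonneg (by positivity)
      _ = ε := by field_simp
  linarith [hlip_i s t, hT s hs]

lemma abs_sin_nat_mul_le (n : ℕ) (x : ℝ) : |Real.sin (n * x)| ≤ n * |Real.sin x| := by
  induction n with
  | zero => simp
  | succ n ih =>
    rw [Nat.cast_succ, add_mul, one_mul, Real.sin_add]
    calc |Real.sin (n * x) * Real.cos x + Real.cos (n * x) * Real.sin x|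
        ≤ |Real.sin (n * x)| * |Real.cos x| + |Real.cos (n * x)| * |Real.sin x| := by
          rw [← abs_mul, ← abs_mul]; exact abs_add_le _ _
      _ ≤ n * |Real.sin x| * 1 + 1 * |Real.sin x| := by
          gcongr
          exacts [Real.abs_cos_le_one x, Real.abs_cos_le_one _]
      _ = (n + 1) * |Real.sin x| := by ring

lemma one_sub_cos_nat_mul_le (k : ℕ) (x : ℝ) :
    1 - Real.cos (k * x) ≤ k ^ 2 * (1 - Real.cos x) := by
  have half (y : ℝ) : 1 - Real.cos y = 2 * Real.sin (y / 2) ^ 2 := by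
    rw [Real.sin_sq_eq_half_sub, mul_div_cancel₀ y two_ne_zero]; ring
  have hsin := abs_sin_nat_mul_le k (x / 2)
  rw [half, half, mul_div_assoc, ← sq_abs, ← sq_abs (Real.sin (x / 2))]
  nlinarith [abs_nonneg (Real.sin (k * (x / 2))), abs_nonneg (Real.sin (x / 2))]

section CharFun

variable {E : Type*} [NormedAddCommGroup E] [InnerProductSpace ℝ E] [MeasurableSpace E]
  [BorelSpace E] {μ : Measure E}

lemma integrable_exp_inner_mul_I [IsFiniteMeasure μ] (t : E) :
    Integrable (fun x => Complex.exp (⟪x, t⟫ * Complex.I)) μ :=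
  (BoundedContinuousFunction.innerProbChar t).integrable μ

lemma re_charFun [IsFiniteMeasure μ] (t : E) :
    (charFun μ t).re = ∫ x, Real.cos ⟪x, t⟫ ∂μ := by
  rw [charFun_apply, ← RCLike.re_to_complex, ← integral_re (integrable_exp_inner_mul_I t)]
  simp [Complex.exp_ofReal_mul_I_re]

lemma one_sub_re_charFun_smul_le [IsProbabilityMeasure μ] (k : ℕ) (t : E) :
    1 - (charFun μ ((k : ℝ) • t)).re ≤ k ^ 2 * (1 - (charFun μ t).re) := by
  have hcos (s : E) : Integrable (fun x => Real.cos ⟪x, s⟫) μ :=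
    Integrable.of_bound (by fun_prop) 1 (ae_of_all _ fun x => by simpa using Real.abs_cos_le_one _)
  have hsub (s : E) : 1 - ∫ x, Real.cos ⟪x, s⟫ ∂μ = ∫ x, 1 - Real.cos ⟪x, s⟫ ∂μ := by
    rw [integral_sub (integrable_const 1) (hcos s)]
    simp
  rw [re_charFun, re_charFun, hsub, hsub, ← integral_const_mul]
  refine integral_mono ((integrable_const 1).sub (hcos _))
    (((integrable_const 1).sub (hcos t)).const_mul _) fun x => ?_
  simpa only [inner_smul_right] using one_sub_cos_nat_mul_le k ⟪x, t⟫

lemma charFun_map_neg (t : E) : charFun (μ.map (-·)) t = (starRingEnd ℂ) (charFun μ t) := by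
  rw [← charFun_neg, charFun_apply, charFun_apply, integral_map (by fun_prop) (by fun_prop)]
  simp [inner_neg_left, inner_neg_right]

lemma charFun_conv_map_neg [SecondCountableTopology E] [IsFiniteMeasure μ] (t : E) :
    charFun (μ ∗ μ.map (-·)) t = (‖charFun μ t‖ ^ 2 : ℝ) := by
  rw [charFun_conv, charFun_map_neg, Complex.mul_conj, Complex.normSq_eq_norm_sq]

lemma one_sub_norm_charFun_sq_smul_le [SecondCountableTopology E] [IsProbabilityMeasure μ]
    (k : ℕ) (t : E) :
    1 - ‖charFun μ ((k : ℝ) • t)‖ ^ 2 ≤ k ^ 2 * (1 - ‖charFun μ t‖ ^ 2) := by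
  have := Measure.isProbabilityMeasure_map (μ := μ) (f := (-·)) (by fun_prop)
  simpa only [charFun_conv_map_neg, Complex.ofReal_re] using
    one_sub_re_charFun_smul_le (μ := μ ∗ μ.map (-·)) k t

lemma norm_charFun_sub_le [IsFiniteMeasure μ] (hμ : Integrable (‖·‖) μ) (s t : E) :
    ‖charFun μ t - charFun μ s‖ ≤ (∫ x, ‖x‖ ∂μ) * ‖t - s‖ := by
  rw [charFun_apply, charFun_apply, ← integral_sub (integrable_exp_inner_mul_I t)
    (integrable_exp_inner_mul_I s), ← integral_mul_const]
  refine (norm_integral_le_integral_norm _).trans <|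
    integral_mono_of_nonneg (ae_of_all _ fun _ => norm_nonneg _) (hμ.mul_const _)
      (ae_of_all _ fun x => ?_)
  have hfactor : Complex.exp (⟪x, t⟫ * Complex.I) - Complex.exp (⟪x, s⟫ * Complex.I) =
      Complex.exp (⟪x, s⟫ * Complex.I) * (Complex.exp (Complex.I * ⟪x, t - s⟫) - 1) := by
    rw [mul_sub, mul_one, ← Complex.exp_add, inner_sub_right]
    push_cast
    ring_nf
  calc ‖Complex.exp (⟪x, t⟫ * Complex.I) - Complex.exp (⟪x, s⟫ * Complex.I)‖
      ≤ ‖⟪x, t - s⟫‖ := by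
        rw [hfactor, norm_mul, Complex.norm_exp_ofReal_mul_I, one_mul]
        exact Real.norm_exp_I_mul_ofReal_sub_one_le
    _ ≤ ‖x‖ * ‖t - s‖ := norm_inner_le_norm x (t - s)

end CharFun

section Mean

variable {E : Type*} [NormedAddCommGroup E] [InnerProductSpace ℝ E] [MeasurableSpace E]
  {μ : ℕ → Measure E}

noncomputable def meanNormCharFun (μ : ℕ → Measure E) (n : ℕ) (t : E) : ℝ :=
  1 / (n : ℝ) * ∑ i ∈ Finset.range n, ‖charFun (μ i) t‖

lemma meanNormCharFun_nonneg (n : ℕ) (t : E) : 0 ≤ meanNormCharFun μ n t := by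
  unfold meanNormCharFun; positivity

lemma meanNormCharFun_le_add [BorelSpace E] [∀ i, IsFiniteMeasure (μ i)]
    (hμ : ∀ i, Integrable (‖·‖) (μ i)) (n : ℕ) (s t : E) :
    meanNormCharFun μ n t ≤
      meanNormCharFun μ n s + (1 / (n : ℝ) * ∑ i ∈ Finset.range n, ∫ x, ‖x‖ ∂μ i) * ‖t - s‖ := by
  have hterm (i : ℕ) : ‖charFun (μ i) t‖ ≤ ‖charFun (μ i) s‖ + (∫ x, ‖x‖ ∂μ i) * ‖t - s‖ := by
    linarith [norm_sub_norm_le (charFun (μ i) t) (charFun (μ i) s),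
      norm_charFun_sub_le (hμ i) s t]
  rw [meanNormCharFun, meanNormCharFun, mul_assoc, ← mul_add, Finset.sum_mul,
    ← Finset.sum_add_distrib]
  gcongr with i
  exact hterm i

lemma one_sub_meanNormCharFun_smul_le [BorelSpace E] [SecondCountableTopology E]
    [∀ i, IsProbabilityMeasure (μ i)] {n : ℕ} (hn : n ≠ 0) (k : ℕ) (t : E) :
    1 - meanNormCharFun μ n ((k : ℝ) • t) ≤ k ^ 2 * (1 - meanNormCharFun μ n t ^ 2) := by
  have hterm (i : ℕ) :
      1 - ‖charFun (μ i) ((k : ℝ) • t)‖ ≤ k ^ 2 * (1 - ‖charFun (μ i) t‖ ^ 2) := by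
    nlinarith [one_sub_norm_charFun_sq_smul_le (μ := μ i) k t,
      norm_charFun_le_one (μ := μ i) ((k : ℝ) • t), norm_nonneg (charFun (μ i) ((k : ℝ) • t))]
  have hjensen : meanNormCharFun μ n t ^ 2 ≤
      1 / (n : ℝ) * ∑ i ∈ Finset.range n, ‖charFun (μ i) t‖ ^ 2 := by
    simpa only [meanNormCharFun, one_div_mul_eq_div, Finset.card_range] using
      sum_div_card_sq_le_sum_sq_div_card (s := Finset.range n) (f := fun i => ‖charFun (μ i) t‖)
  have hsum := Finset.sum_le_sum fun i (_ : i ∈ Finset.range n) => hterm i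
  rw [Finset.sum_sub_distrib, ← Finset.mul_sum, Finset.sum_sub_distrib] at hsum
  simp only [Finset.sum_const, Finset.card_range, nsmul_eq_mul, mul_one] at hsum
  have hn' : (0 : ℝ) < n := by positivity
  calc 1 - meanNormCharFun μ n ((k : ℝ) • t)
      = 1 / (n : ℝ) * (n - ∑ i ∈ Finset.range n, ‖charFun (μ i) ((k : ℝ) • t)‖) := by
        rw [meanNormCharFun]; field_simp
    _ ≤ 1 / (n : ℝ) * (k ^ 2 * (n - ∑ i ∈ Finset.range n, ‖charFun (μ i) t‖ ^ 2)) := by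
        gcongr
    _ = k ^ 2 * (1 - 1 / (n : ℝ) * ∑ i ∈ Finset.range n, ‖charFun (μ i) t‖ ^ 2) := by
        field_simp
    _ ≤ k ^ 2 * (1 - meanNormCharFun μ n t ^ 2) := by gcongr

lemma meanNormCharFun_le_sqrt_of_smul_le [BorelSpace E] [SecondCountableTopology E]
    [∀ i, IsProbabilityMeasure (μ i)] {n k : ℕ} (hn : n ≠ 0) (hk : k ≠ 0)
    {η : ℝ} {t : E} (h : meanNormCharFun μ n ((k : ℝ) • t) ≤ 1 - η) :
    meanNormCharFun μ n t ≤ √(1 - η / k ^ 2) := by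
  refine Real.le_sqrt_of_sq_le ?_
  rw [le_sub_comm, div_le_iff₀ (by positivity), mul_comm]
  linarith [one_sub_meanNormCharFun_smul_le (μ := μ) hn k t]

end Mean

section Array

variable {E : Type*} [NormedAddCommGroup E] [InnerProductSpace ℝ E] [MeasurableSpace E]
  [BorelSpace E] {μ : ℕ → ℕ → Measure E}

lemma exists_eventually_meanNormCharFun_le_of_cramer [ProperSpace E]
    [∀ n i, IsFiniteMeasure (μ n i)] (hint : ∀ n i, Integrable (‖·‖) (μ n i)) {K : ℝ}
    (hK : ∀ᶠ n : ℕ in atTop, 1 / (n : ℝ) * ∑ i ∈ Finset.range n, ∫ x, ‖x‖ ∂μ n i ≤ K)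
    {b C R₀ : ℝ} (hb : 0 ≤ b) (hC : 0 < C)
    (hcram : ∀ t : E, R₀ < ‖t‖ → ∀ᶠ n in atTop, meanNormCharFun (μ n) n t ≤ 1 - C / ‖t‖ ^ b)
    {a a' : ℝ} (ha : 0 < a) (hR₀a : R₀ < a) (haa' : a ≤ a') :
    ∃ δ > 0, ∀ᶠ n in atTop, ∀ t : E, a ≤ ‖t‖ → ‖t‖ ≤ a' → meanNormCharFun (μ n) n t ≤ 1 - δ := by
  have hδ : 0 < C / a' ^ b := by have := ha.trans_le haa'; positivity
  let A : Set E := Metric.closedBall 0 a' \ Metric.ball 0 a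
  have hpt : ∀ t ∈ A, ∀ᶠ n in atTop, meanNormCharFun (μ n) n t ≤ 1 - C / a' ^ b := by
    intro t ht
    simp only [A, Set.mem_sdiff, mem_closedBall_zero_iff, mem_ball_zero_iff, not_lt] at ht
    have hta' : C / a' ^ b ≤ C / ‖t‖ ^ b := by
      have := ha.trans_le ht.2
      gcongr
      exact ht.1
    filter_upwards [hcram t (hR₀a.trans_le ht.2)] with n hn
    linarith
  have hlip : ∀ᶠ n in atTop, ∀ s t,
      meanNormCharFun (μ n) n t ≤ meanNormCharFun (μ n) n s + K * dist t s := by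
    filter_upwards [hK] with n hn s t
    refine (meanNormCharFun_le_add (hint n) n s t).trans ?_
    rw [dist_eq_norm]
    gcongr
  refine ⟨C / a' ^ b / 2, half_pos hδ, ?_⟩
  have hcompact : IsCompact A := (isCompact_closedBall 0 a').diff Metric.isOpen_ball
  filter_upwards [hcompact.eventually_forall_le_of_lipschitz (half_pos hδ) hlip hpt]
    with n hn t hat hta'
  linarith [hn t (by simp [A, hat, hta'])]

end Array

section TriangularArray

variable {d : ℕ} {X : ℕ → ℕ → Ω → EuclideanSpace ℝ (Fin d)}

lemma charFnRV_eq_charFun {Y : Ω → EuclideanSpace ℝ (Fin d)} (hY : AEMeasurable Y)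
    (t : EuclideanSpace ℝ (Fin d)) : charFnRV Y t = charFun ((ℙ : Measure Ω).map Y) t := by
  rw [charFnRV, charFun_apply, integral_map hY (by fun_prop)]
  simp_rw [real_inner_comm]

lemma mean_norm_charFnRV_eq (hX : ∀ i n, Measurable (X i n)) (n : ℕ)
    (t : EuclideanSpace ℝ (Fin d)) :
    1 / (n : ℝ) * ∑ i ∈ Finset.range n, ‖charFnRV (X i n) t‖ =
      meanNormCharFun (fun i => (ℙ : Measure Ω).map (X i n)) n t := by
  simp only [meanNormCharFun, charFnRV_eq_charFun (hX _ _).aemeasurable]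

lemma rho_one_eq (hX : ∀ i n, Measurable (X i n)) (n : ℕ) :
    rho X 1 n = 1 / (n : ℝ) * ∑ i ∈ Finset.range n, ∫ x, ‖x‖ ∂(ℙ : Measure Ω).map (X i n) := by
  simp only [rho, Real.rpow_one,
    integral_map (hX _ _).aemeasurable continuous_norm.aestronglyMeasurable]

end TriangularArray

theorem statement8_general [IsProbabilityMeasure (ℙ : Measure Ω)] {d : ℕ} {b : ℝ} (hb : 0 < b)
    (X : ℕ → ℕ → Ω → EuclideanSpace ℝ (Fin d))
    (hmeas : ∀ i n, Measurable (X i n))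
    (hint : ∀ i n, Integrable (fun ω => ‖X i n ω‖) ℙ)
    (hcramer : meanWeakCramer X b)
    (hrho : ∃ K : ℝ, ∀ n : ℕ, 1 ≤ n → rho X 1 n ≤ K)
    (r R : ℝ) (hr : 0 < r) (hrR : r < R) :
    limsup (fun n : ℕ =>
        ⨆ u : {u : EuclideanSpace ℝ (Fin d) // r ≤ ‖u‖ ∧ ‖u‖ ≤ R},
          (1 / (n : ℝ)) * ∑ i ∈ Finset.range n,
            ‖charFnRV (X i n) (u : EuclideanSpace ℝ (Fin d))‖)
      atTop < 1 := by
  obtain ⟨C, hC, R₀, hR₀, hcram⟩ := hcramer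
  obtain ⟨K, hK⟩ := hrho
  let μ (n i : ℕ) := (ℙ : Measure Ω).map (X i n)
  have hμ (n i : ℕ) : IsProbabilityMeasure (μ n i) :=
    Measure.isProbabilityMeasure_map (hmeas i n).aemeasurable
  simp only [mean_norm_charFnRV_eq hmeas] at hcram ⊢
  obtain ⟨k, hk⟩ := exists_nat_gt (R₀ / r)
  have hk₀ : (0 : ℝ) < k := (div_pos hR₀ hr).trans hk
  obtain ⟨δ, hδ, hfar⟩ := exists_eventually_meanNormCharFun_le_of_cramer (μ := μ)
    (fun n i => (integrable_map_measure continuous_norm.aestronglyMeasurable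
      (hmeas i n).aemeasurable).2 (hint i n))
    ((eventually_ge_atTop 1).mono fun n hn => rho_one_eq hmeas n ▸ hK n hn) hb.le hC hcram
    (mul_pos hk₀ hr) ((div_lt_iff₀ hr).1 hk) (by gcongr : (k : ℝ) * r ≤ k * R)
  have hnear : ∀ᶠ n in atTop, ⨆ u : {u : EuclideanSpace ℝ (Fin d) // r ≤ ‖u‖ ∧ ‖u‖ ≤ R},
      meanNormCharFun (μ n) n u ≤ √(1 - δ / k ^ 2) := by
    filter_upwards [hfar, eventually_ne_atTop 0] with n hfar hn
    refine Real.iSup_le (fun ⟨u, hur, huR⟩ => meanNormCharFun_le_sqrt_of_smul_le hn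
      (by exact_mod_cast hk₀.ne') (hfar _ ?_ ?_)) (Real.sqrt_nonneg _)
    all_goals rw [norm_smul, Real.norm_natCast]; gcongr
  have hnonneg (n : ℕ) : 0 ≤ ⨆ u : {u : EuclideanSpace ℝ (Fin d) // r ≤ ‖u‖ ∧ ‖u‖ ≤ R},
      meanNormCharFun (μ n) n u :=
    Real.iSup_nonneg fun _ => meanNormCharFun_nonneg n _
  refine (limsup_le_of_le (isCoboundedUnder_le_of_le atTop hnonneg) hnear).trans_lt ?_
  rw [Real.sqrt_lt' one_pos]
  have : 0 < δ / k ^ 2 := by positivity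
  linarith

/-- Local Cramer bound: a triangular array of independent random vectors in the class
`C̄(d,b)` with bounded average first moments satisfies
`limsup_n sup_{r ≤ ‖u‖ ≤ R} (1/n) ∑ |φ_{X_{i,n}}(u)| < 1`. -/
theorem statement8 [IsProbabilityMeasure (ℙ : Measure Ω)] {d : ℕ} {b : ℝ} (hb : 0 < b)
    (X : ℕ → ℕ → Ω → EuclideanSpace ℝ (Fin d))
    (hmeas : ∀ i n, Measurable (X i n))
    (hindep : ∀ n, iIndepFun (fun i : Fin n => X i n) ℙ)
    (hint : ∀ i n, Integrable (fun ω => ‖X i n ω‖) ℙ)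
    (hcramer : meanWeakCramer X b)
    (hrho : ∃ K : ℝ, ∀ n : ℕ, 1 ≤ n → rho X 1 n ≤ K)
    (r R : ℝ) (hr : 0 < r) (hrR : r < R) :
    limsup (fun n : ℕ =>
        ⨆ u : {u : EuclideanSpace ℝ (Fin d) // r ≤ ‖u‖ ∧ ‖u‖ ≤ R},
          (1 / (n : ℝ)) * ∑ i ∈ Finset.range n,
            ‖charFnRV (X i n) (u : EuclideanSpace ℝ (Fin d))‖)
      atTop < 1 :=
  statement8_general hb X hmeas hint hcramer hrho r R hr hrR
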